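/- If n is a positive integer with α(n) > 2, then the 2-adic valuation of C(4n, 2n−1) is strictly greater than 2. -/
import Mathlib

lemma sum_digits_two_mul (m : ℕ) :
    (Nat.digits 2 (2 * m)).sum = (Nat.digits 2 m).sum := by
  rcases Nat.eq_zero_or_pos m with rfl | hm
  · simp
  · rw [Nat.digits_def' (by norm_num) (by omega)]
    simp [Nat.mul_div_cancel_left m (by norm_num : 0 < 2), Nat.mul_mod_right]

lemma sum_digits_two_mul_add_one (m : ℕ) :
    (Nat.digits 2 (2 * m + 1)).sum = (Nat.digits 2 m).sum + 1 := by
  rw [Nat.digits_def' (by norm_num) (by omega)]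
  have h1 : (2 * m + 1) % 2 = 1 := by omega
  have h2 : (2 * m + 1) / 2 = m := by omega
  simp [h1, h2]; ring

lemma sum_digits_pos {m : ℕ} (hm : 0 < m) : 0 < (Nat.digits 2 m).sum := by
  induction m using Nat.strong_induction_on with
  | _ m ih =>
    rcases Nat.even_or_odd m with ⟨j, hj⟩ | ⟨j, hj⟩
    · have hj' : m = 2 * j := by omega
      subst hj'
      rw [sum_digits_two_mul]
      exact ih j (by omega) (by omega)
    · subst hj
      rw [sum_digits_two_mul_add_one]
      omega

/-- If `α(n) > 2` then `ν(C(4n, 2n−1)) > 2`. -/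
theorem nu_choose_gt_two (n : ℕ) (hn : 0 < n) (hα : 2 < (Nat.digits 2 n).sum) :
    2 < padicValNat 2 ((4 * n).choose (2 * n - 1)) := by
  have h : (2 * n - 1 : ℕ) ≤ 4 * n := by omega
  have key := sub_one_mul_padicValNat_choose_eq_sub_sum_digits (p := 2) h
  have e1 : (4 * n : ℕ) - (2 * n - 1) = 2 * n + 1 := by omega
  rw [e1] at key
  have d1 : (Nat.digits 2 (2 * n - 1)).sum = (Nat.digits 2 (n - 1)).sum + 1 := by
    have : 2 * n - 1 = 2 * (n - 1) + 1 := by omega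
    rw [this, sum_digits_two_mul_add_one]
  have d2 : (Nat.digits 2 (2 * n + 1)).sum = (Nat.digits 2 n).sum + 1 :=
    sum_digits_two_mul_add_one n
  have d3 : (Nat.digits 2 (4 * n)).sum = (Nat.digits 2 n).sum := by
    have : 4 * n = 2 * (2 * n) := by ring
    rw [this, sum_digits_two_mul, sum_digits_two_mul]
  have hn1 : 0 < n - 1 := by
    rcases Nat.lt_or_ge n 2 with h2 | h2
    · interval_cases n <;> simp_all
    · omega
  have hp1 : 0 < (Nat.digits 2 (n - 1)).sum := sum_digits_pos hn1
  omega
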